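/- Let a > 0, and let A : (0,a] → GL(l,ℝ) be a curve of symmetric positive definite matrices with A(ε) → A₀ as ε → 0⁺, where A₀ is symmetric positive definite. Let B : (0,a] → GL(l,ℝ) be a curve of matrices and B₀ a fixed matrix such that (1/ε)(B(ε) − B₀) → 0 as ε → 0⁺. Then for any x₁, x₂ ∈ ℝ^l and any L ∈ ℂ: ε^{l/2} Σ_{n ∈ ℤ^l} e^{−ε⟨n + x₁, A(ε)(n + x₁)⟩} exp(i⟨n + x₂, B(ε)(n + x₂)⟩) → L as ε → 0⁺ if and only if ε^{l/2} Σ_{n ∈ ℤ^l} e^{−ε⟨n + x₁, A(ε)(n + x₁)⟩} exp(i⟨n + x₂, B₀(n + x₂)⟩) → L as ε → 0⁺. -/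

import Mathlib

open scoped BigOperators
open Complex

noncomputable section

section Statement18Aux

open Filter MeasureTheory Real

set_option maxHeartbeats 1000000

private def nsq {l : ℕ} (v : Fin l → ℝ) : ℝ := ∑ i, v i ^ 2
private def entSum {l : ℕ} (M : Matrix (Fin l) (Fin l) ℝ) : ℝ := ∑ i, ∑ j, |M i j|

private lemma nsq_def {l : ℕ} (v : Fin l → ℝ) : nsq v = ∑ i, v i ^ 2 := rfl


-- nsq moved {l : ℕ} (v : Fin l → ℝ) : ℝ := ∑ i, v i ^ 2
-- entSum moved {l : ℕ} (M : Matrix (Fin l) (Fin l) ℝ) : ℝ := ∑ i, ∑ j, |M i j|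

lemma nsq_nonneg {l : ℕ} (v : Fin l → ℝ) : 0 ≤ nsq v :=
  Finset.sum_nonneg fun i _ => sq_nonneg _

lemma entSum_nonneg {l : ℕ} (M : Matrix (Fin l) (Fin l) ℝ) : 0 ≤ entSum M :=
  Finset.sum_nonneg fun i _ => Finset.sum_nonneg fun j _ => abs_nonneg _

lemma abs_le_sqrt_nsq {l : ℕ} (v : Fin l → ℝ) (i : Fin l) : |v i| ≤ Real.sqrt (nsq v) := by
  rw [← Real.sqrt_sq_eq_abs]
  exact Real.sqrt_le_sqrt (Finset.single_le_sum (fun j _ => sq_nonneg (v j)) (Finset.mem_univ i))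

lemma quad_abs_le {l : ℕ} (M : Matrix (Fin l) (Fin l) ℝ) (v : Fin l → ℝ) :
    |dotProduct v (M.mulVec v)| ≤ entSum M * nsq v := by
  have hvij : ∀ i j, |v i| * |v j| ≤ nsq v := by
    intro i j
    calc |v i| * |v j| ≤ Real.sqrt (nsq v) * Real.sqrt (nsq v) :=
          mul_le_mul (abs_le_sqrt_nsq v i) (abs_le_sqrt_nsq v j) (abs_nonneg _)
            (Real.sqrt_nonneg _)
      _ = nsq v := Real.mul_self_sqrt (nsq_nonneg v)
  simp only [dotProduct, Matrix.mulVec, entSum]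
  calc |∑ i, v i * ∑ j, M i j * v j| ≤ ∑ i, |v i * ∑ j, M i j * v j| :=
        Finset.abs_sum_le_sum_abs _ _
    _ ≤ ∑ i, ∑ j, |M i j| * nsq v := by
        refine Finset.sum_le_sum fun i _ => ?_
        rw [abs_mul]
        calc |v i| * |∑ j, M i j * v j| ≤ |v i| * ∑ j, |M i j * v j| := by
              exact mul_le_mul_of_nonneg_left (Finset.abs_sum_le_sum_abs _ _) (abs_nonneg _)
          _ = ∑ j, |M i j| * (|v i| * |v j|) := by
              rw [Finset.mul_sum]; congr 1; funext j; rw [abs_mul]; ring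
          _ ≤ ∑ j, |M i j| * nsq v := by
              exact Finset.sum_le_sum fun j _ => mul_le_mul_of_nonneg_left (hvij i j) (abs_nonneg _)
    _ = (∑ i, ∑ j, |M i j|) * nsq v := by rw [Finset.sum_mul]; congr 1; funext i; rw [Finset.sum_mul]

lemma nsq_mulVec_le {l : ℕ} (M : Matrix (Fin l) (Fin l) ℝ) (w : Fin l → ℝ) :
    nsq (M.mulVec w) ≤ (∑ i, ∑ j, M i j ^ 2) * nsq w := by
  simp only [nsq, Matrix.mulVec, dotProduct]
  calc ∑ i, (∑ j, M i j * w j) ^ 2 ≤ ∑ i, (∑ j, M i j ^ 2) * ∑ j, w j ^ 2 :=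
        Finset.sum_le_sum fun i _ => Finset.sum_mul_sq_le_sq_mul_sq _ _ _
    _ = (∑ i, ∑ j, M i j ^ 2) * ∑ j, w j ^ 2 := by rw [Finset.sum_mul]

open scoped MatrixOrder in
lemma posdef_coercive {l : ℕ} {A₀ : Matrix (Fin l) (Fin l) ℝ} (hA0 : A₀.PosDef) :
    ∃ c : ℝ, 0 < c ∧ ∀ v : Fin l → ℝ, c * nsq v ≤ dotProduct v (A₀.mulVec v) := by
  set S := CFC.sqrt A₀ with hS
  have hSherm : S.IsHermitian := (Matrix.nonneg_iff_posSemidef.1 (CFC.sqrt_nonneg A₀)).1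
  have hST : S.transpose = S := by
    rw [← Matrix.conjTranspose_eq_transpose_of_trivial]; exact hSherm.eq
  have hSS : S * S = A₀ := CFC.sqrt_mul_sqrt_self A₀ hA0.posSemidef.nonneg
  have hdet : IsUnit S.det := by
    have h1 : S.det * S.det = A₀.det := by rw [← Matrix.det_mul, hSS]
    have h2 : (0:ℝ) < A₀.det := hA0.det_pos
    refine isUnit_iff_ne_zero.2 fun h => ?_
    rw [h, mul_zero] at h1; exact (h1 ▸ h2).false
  have hinv : S⁻¹ * S = 1 := Matrix.nonsing_inv_mul S hdet
  set D : ℝ := ∑ i, ∑ j, (S⁻¹) i j ^ 2 with hD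
  have hD0 : 0 ≤ D := Finset.sum_nonneg fun i _ => Finset.sum_nonneg fun j _ => sq_nonneg _
  refine ⟨(D + 1)⁻¹, by positivity, fun v => ?_⟩
  have hQ : dotProduct v (A₀.mulVec v) = nsq (S.mulVec v) := by
    rw [← hSS, ← Matrix.mulVec_mulVec, Matrix.dotProduct_mulVec]
    have hvS : Matrix.vecMul v S = S.mulVec v := by
      rw [← Matrix.mulVec_transpose, hST]
    rw [hvS]
    simp [nsq, dotProduct, sq]
  have hv : v = (S⁻¹).mulVec (S.mulVec v) := by
    rw [Matrix.mulVec_mulVec, hinv, Matrix.one_mulVec]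
  have hCS : nsq v ≤ D * nsq (S.mulVec v) := by
    calc nsq v = nsq ((S⁻¹).mulVec (S.mulVec v)) := by rw [← hv]
      _ ≤ D * nsq (S.mulVec v) := nsq_mulVec_le _ _
  rw [hQ]
  have h1 : nsq v ≤ (D + 1) * nsq (S.mulVec v) := by nlinarith [nsq_nonneg (S.mulVec v)]
  rw [inv_mul_le_iff₀ (by positivity : (0:ℝ) < D + 1)]
  linarith



lemma mul_exp_neg_le (t : ℝ) (ht : 0 ≤ t) : t * Real.exp (-t) ≤ Real.exp (-(t/2)) := by
  have h1 : 1 + t/4 ≤ Real.exp (t/4) := by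
    have := Real.add_one_le_exp (t/4); linarith
  have h2 : Real.exp (t/4) * Real.exp (t/4) = Real.exp (t/2) := by
    rw [← Real.exp_add]; ring_nf
  have h3 : t ≤ Real.exp (t/2) := by nlinarith [Real.exp_pos (t/4), sq_nonneg (1 - t/4)]
  have h6 : Real.exp (t/2) * Real.exp (-t) = Real.exp (-(t/2)) := by
    rw [← Real.exp_add]; ring_nf
  calc t * Real.exp (-t) ≤ Real.exp (t/2) * Real.exp (-t) :=
        mul_le_mul_of_nonneg_right h3 (Real.exp_pos _).le
    _ = Real.exp (-(t/2)) := h6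

lemma norm_cexp_I_mul_sub (p q : ℝ) :
    ‖Complex.exp (Complex.I * p) - Complex.exp (Complex.I * q)‖ ≤ |p - q| := by
  have key : ∀ t : ℝ, ‖Complex.exp (Complex.I * t) - 1‖ ≤ |t| := by
    intro t
    have h1 : Complex.exp (Complex.I * t) = Complex.exp (t * Complex.I) := by ring_nf
    rw [h1, Complex.exp_mul_I]
    have : (Complex.cos t + Complex.sin t * Complex.I - 1) =
        Complex.ofReal (Real.cos t - 1) + Complex.ofReal (Real.sin t) * Complex.I := by
      push_cast; ring
    rw [this]
    rw [show |t| = Real.sqrt (t^2) by rw [Real.sqrt_sq_eq_abs]]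
    have hnorm : ‖Complex.ofReal (Real.cos t - 1) + Complex.ofReal (Real.sin t) * Complex.I‖
        = Real.sqrt ((Real.cos t - 1)^2 + (Real.sin t)^2) := by
      rw [Complex.norm_def, Complex.normSq_add_mul_I]
    rw [hnorm]
    apply Real.sqrt_le_sqrt
    have hs : Real.sin (t/2) ^ 2 = 1/2 - Real.cos t / 2 := by
      have h := Real.sin_sq_eq_half_sub (t/2)
      rw [show 2 * (t/2) = t by ring] at h
      exact h
    have hb : Real.sin (t/2) ^ 2 ≤ (t/2)^2 := Real.sin_sq_le_sq
    have hsin : Real.sin t ^ 2 = 1 - Real.cos t ^ 2 := by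
      have := Real.sin_sq_add_cos_sq t; linarith
    nlinarith [Real.cos_le_one t, Real.neg_one_le_cos t]
  have h2 : Complex.exp (Complex.I * p) - Complex.exp (Complex.I * q)
      = Complex.exp (Complex.I * q) * (Complex.exp (Complex.I * (p - q)) - 1) := by
    rw [mul_sub, ← Complex.exp_add, mul_one]; ring_nf
  rw [h2, norm_mul]
  have h3 : ‖Complex.exp (Complex.I * q)‖ = 1 := by
    rw [Complex.norm_exp]
    simp
  rw [h3, one_mul]
  simpa using key (p - q)


lemma gauss_nat {s : ℝ} (hs : 0 < s) :
    Summable (fun k : ℕ => Real.exp (-s * (k : ℝ)^2)) ∧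
    ∑' k : ℕ, Real.exp (-s * (k : ℝ)^2) ≤ 1 + Real.sqrt (Real.pi / s) := by
  have hint : Integrable (fun u : ℝ => Real.exp (-s * u^2)) := integrable_exp_neg_mul_sq hs
  have hcont : Continuous (fun u : ℝ => Real.exp (-s * u^2)) := by continuity
  -- partial sums of shifted terms bounded by the Gaussian integral
  have hstep : ∀ k : ℕ, Real.exp (-s * ((k:ℝ)+1)^2) ≤
      ∫ u in (k:ℝ)..((k:ℝ)+1), Real.exp (-s * u^2) := by
    intro k
    have h1 : Real.exp (-s * ((k:ℝ)+1)^2) =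
        ∫ _ in (k:ℝ)..((k:ℝ)+1), Real.exp (-s * ((k:ℝ)+1)^2) := by
      rw [intervalIntegral.integral_const]
      simp
    rw [h1]
    apply intervalIntegral.integral_mono_on (by linarith)
      (intervalIntegrable_const) (hint.intervalIntegrable)
    intro u hu
    apply Real.exp_le_exp.2
    have h2 : 0 ≤ u := le_trans (Nat.cast_nonneg k) hu.1
    have h3 : u^2 ≤ ((k:ℝ)+1)^2 := pow_le_pow_left₀ h2 hu.2 2
    nlinarith [mul_le_mul_of_nonneg_left h3 hs.le]
  have hpsum : ∀ N : ℕ, ∑ k ∈ Finset.range N, Real.exp (-s * ((k:ℝ)+1)^2)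
      ≤ Real.sqrt (Real.pi / s) := by
    intro N
    have hadj : ∑ k ∈ Finset.range N,
        (∫ u in (k:ℝ)..((k:ℝ)+1), Real.exp (-s * u^2))
        = ∫ u in (0:ℝ)..(N:ℝ), Real.exp (-s * u^2) := by
      have := intervalIntegral.sum_integral_adjacent_intervals
        (a := fun k : ℕ => (k : ℝ)) (n := N)
        (fun k _ => hint.intervalIntegrable)
      simpa using this
    calc ∑ k ∈ Finset.range N, Real.exp (-s * ((k:ℝ)+1)^2)
        ≤ ∑ k ∈ Finset.range N, ∫ u in (k:ℝ)..((k:ℝ)+1), Real.exp (-s * u^2) :=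
          Finset.sum_le_sum fun k _ => hstep k
      _ = ∫ u in (0:ℝ)..(N:ℝ), Real.exp (-s * u^2) := hadj
      _ ≤ ∫ u : ℝ, Real.exp (-s * u^2) := by
          rw [intervalIntegral.integral_of_le (by positivity : (0:ℝ) ≤ (N:ℝ))]
          exact setIntegral_le_integral hint
            (Filter.Eventually.of_forall fun u => (Real.exp_pos _).le)
      _ = Real.sqrt (Real.pi / s) := integral_gaussian s
  have hsum1 : Summable (fun k : ℕ => Real.exp (-s * ((k:ℝ)+1)^2)) :=
    summable_of_sum_range_le (fun k => (Real.exp_pos _).le) hpsum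
  have htsum1 : ∑' k : ℕ, Real.exp (-s * ((k:ℝ)+1)^2) ≤ Real.sqrt (Real.pi / s) :=
    Real.tsum_le_of_sum_range_le (fun k => (Real.exp_pos _).le) hpsum
  have hshift : Summable (fun k : ℕ => Real.exp (-s * (k : ℝ)^2)) := by
    rw [← summable_nat_add_iff 1]
    convert hsum1 using 2 with k
    case e'_3 => rfl
    push_cast; ring_nf
  constructor
  · exact hshift
  · have h0 := hshift.tsum_eq_zero_add
    have : ∑' k : ℕ, Real.exp (-s * ((k:ℝ)+1)^2)
        = ∑' k : ℕ, Real.exp (-s * ((k+1:ℕ) : ℝ)^2) := by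
      congr 1; funext k; push_cast; ring_nf
    rw [h0]
    simp only [Nat.cast_zero]
    rw [show (-s * (0:ℝ)^2) = 0 by ring, Real.exp_zero]
    rw [← this] at *
    linarith [htsum1, this ▸ htsum1]
lemma gauss_int {s : ℝ} (hs : 0 < s) (x : ℝ) :
    Summable (fun n : ℤ => Real.exp (-s * ((n : ℝ) + x)^2)) ∧
    ∑' n : ℤ, Real.exp (-s * ((n : ℝ) + x)^2) ≤ 2 + 2 * Real.sqrt Real.pi / Real.sqrt s := by
  obtain ⟨hNsum, hNle⟩ := gauss_nat hs
  have main : ∀ y : ℝ, 0 ≤ y → y < 1 →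
      Summable (fun n : ℤ => Real.exp (-s * ((n : ℝ) + y)^2)) ∧
      ∑' n : ℤ, Real.exp (-s * ((n : ℝ) + y)^2) ≤ 2 * (1 + Real.sqrt (Real.pi / s)) := by
    intro y hy0 hy1
    have hsumh : HasSum (fun n : ℤ => if 0 ≤ n then Real.exp (-s * (n : ℝ)^2)
        else Real.exp (-s * ((n : ℝ) + 1)^2))
        ((∑' k : ℕ, Real.exp (-s * (k : ℝ)^2)) + ∑' k : ℕ, Real.exp (-s * (k : ℝ)^2)) := by
      apply HasSum.of_nat_of_neg_add_one
      · have heq : (fun k : ℕ => if 0 ≤ (k:ℤ) then Real.exp (-s * ((k:ℤ) : ℝ)^2)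
            else Real.exp (-s * (((k:ℤ) : ℝ) + 1)^2)) = fun k : ℕ => Real.exp (-s * (k : ℝ)^2) := by
          funext k
          rw [if_pos (Int.ofNat_nonneg k)]
          norm_num
        rw [heq]; exact hNsum.hasSum
      · convert hNsum.hasSum using 1
        funext k
        rw [if_neg (by omega)]
        push_cast
        ring_nf
    have hgh : ∀ n : ℤ, Real.exp (-s * ((n : ℝ) + y)^2) ≤
        (if 0 ≤ n then Real.exp (-s * (n : ℝ)^2) else Real.exp (-s * ((n : ℝ) + 1)^2)) := by
      intro n
      by_cases hn : 0 ≤ n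
      · rw [if_pos hn]
        apply Real.exp_le_exp.2
        have hn' : (0:ℝ) ≤ (n:ℝ) := by exact_mod_cast hn
        have hq : (n:ℝ)^2 ≤ ((n:ℝ) + y)^2 := by nlinarith
        nlinarith [mul_le_mul_of_nonneg_left hq hs.le]
      · rw [if_neg hn]
        apply Real.exp_le_exp.2
        have hn' : (n:ℝ) + 1 ≤ 0 := by exact_mod_cast (by omega : (n:ℤ) + 1 ≤ 0)
        have hq : ((n:ℝ) + 1)^2 ≤ ((n:ℝ) + y)^2 := by
          nlinarith [mul_nonneg (by linarith : (0:ℝ) ≤ 1 - y)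
            (by linarith : (0:ℝ) ≤ -(2*(n:ℝ) + 1 + y))]
        nlinarith [mul_le_mul_of_nonneg_left hq hs.le]
    have hgsum : Summable (fun n : ℤ => Real.exp (-s * ((n : ℝ) + y)^2)) :=
      Summable.of_nonneg_of_le (fun n => (Real.exp_pos _).le) hgh hsumh.summable
    refine ⟨hgsum, ?_⟩
    calc ∑' n : ℤ, Real.exp (-s * ((n : ℝ) + y)^2)
        ≤ ∑' n : ℤ, (if 0 ≤ n then Real.exp (-s * (n : ℝ)^2)
            else Real.exp (-s * ((n : ℝ) + 1)^2)) := Summable.tsum_le_tsum hgh hgsum hsumh.summable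
      _ = (∑' k : ℕ, Real.exp (-s * (k : ℝ)^2)) + ∑' k : ℕ, Real.exp (-s * (k : ℝ)^2) :=
          hsumh.tsum_eq
      _ ≤ 2 * (1 + Real.sqrt (Real.pi / s)) := by linarith
  obtain ⟨hgsum, hgle⟩ := main (Int.fract x) (Int.fract_nonneg x) (Int.fract_lt_one x)
  have hfg : (fun n : ℤ => Real.exp (-s * ((n : ℝ) + x)^2))
      = fun n : ℤ => Real.exp (-s * (((n + ⌊x⌋ : ℤ) : ℝ) + Int.fract x)^2) := by
    funext n
    have : ((n:ℝ) + x) = (((n + ⌊x⌋ : ℤ) : ℝ) + Int.fract x) := by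
      rw [Int.fract]; push_cast; ring
    rw [this]
  have hsumf : Summable (fun n : ℤ => Real.exp (-s * ((n : ℝ) + x)^2)) := by
    rw [hfg]
    exact (Equiv.addRight ⌊x⌋).summable_iff.2 hgsum
  refine ⟨hsumf, ?_⟩
  have htf : ∑' n : ℤ, Real.exp (-s * ((n : ℝ) + x)^2)
      = ∑' n : ℤ, Real.exp (-s * (((n : ℤ) : ℝ) + Int.fract x)^2) := by
    rw [hfg]
    exact (Equiv.addRight ⌊x⌋).tsum_eq (fun n : ℤ => Real.exp (-s * ((n : ℝ) + Int.fract x)^2))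
  rw [htf]
  have hsqrt : Real.sqrt (Real.pi / s) = Real.sqrt Real.pi / Real.sqrt s :=
    Real.sqrt_div Real.pi_pos.le s
  calc ∑' n : ℤ, Real.exp (-s * (((n : ℤ) : ℝ) + Int.fract x)^2)
      ≤ 2 * (1 + Real.sqrt (Real.pi / s)) := hgle
    _ = 2 + 2 * Real.sqrt Real.pi / Real.sqrt s := by rw [hsqrt]; ring

lemma hasSum_pi_prod : ∀ (l : ℕ) (F : Fin l → ℤ → ℝ) (S : Fin l → ℝ),
    (∀ i k, 0 ≤ F i k) → (∀ i, HasSum (F i) (S i)) →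
    HasSum (fun n : Fin l → ℤ => ∏ i, F i (n i)) (∏ i, S i) := by
  intro l
  induction l with
  | zero =>
    intro F S _ _
    have h1 : (fun n : Fin 0 → ℤ => ∏ i, F i (n i)) = fun _ => 1 := by
      funext n; simp
    rw [h1, show (∏ i, S i) = 1 by simp]
    have := hasSum_single (f := fun _ : Fin 0 → ℤ => (1:ℝ)) (fun _ => (0:ℤ))
      (fun b hb => absurd (Subsingleton.elim b _) hb)
    simpa using this
  | succ l IH =>
    intro F S hpos hsum
    have IH' := IH (fun i : Fin l => F i.succ) (fun i : Fin l => S i.succ)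
      (fun i k => hpos i.succ k) (fun i => hsum i.succ)
    have hmul : HasSum (fun p : ℤ × (Fin l → ℤ) => F 0 p.1 * ∏ i : Fin l, F i.succ (p.2 i))
        (S 0 * ∏ i : Fin l, S i.succ) := by
      exact HasSum.mul (f := F 0) (g := fun m : Fin l → ℤ => ∏ i : Fin l, F i.succ (m i))
        (hsum 0) IH'
        (Summable.mul_of_nonneg (f := F 0)
          (g := fun m : Fin l → ℤ => ∏ i : Fin l, F i.succ (m i))
          (hsum 0).summable IH'.summable
          (fun k => hpos 0 k) (fun n => Finset.prod_nonneg fun i _ => hpos i.succ (n i)))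
    have := (Fin.consEquiv fun _ : Fin (l+1) => ℤ).symm.hasSum_iff.2 hmul
    have heq : ((fun p : ℤ × (Fin l → ℤ) => F 0 p.1 * ∏ i : Fin l, F i.succ (p.2 i)) ∘
        (Fin.consEquiv fun _ : Fin (l+1) => ℤ).symm) = fun n : Fin (l+1) → ℤ => ∏ i, F i (n i) := by
      funext n
      simp only [Function.comp]
      rw [Fin.prod_univ_succ]
      rfl
    rw [heq] at this
    rw [Fin.prod_univ_succ]
    exact this

lemma gauss_multi (l : ℕ) {s : ℝ} (hs : 0 < s) (x : Fin l → ℝ) :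
    Summable (fun n : Fin l → ℤ => Real.exp (-s * nsq (fun i => (n i : ℝ) + x i))) ∧
    ∑' n : Fin l → ℤ, Real.exp (-s * nsq (fun i => (n i : ℝ) + x i)) ≤
      (2 + 2 * Real.sqrt Real.pi / Real.sqrt s) ^ l := by
  have key := hasSum_pi_prod l (fun i k => Real.exp (-s * ((k : ℝ) + x i)^2))
    (fun i => ∑' n : ℤ, Real.exp (-s * ((n : ℝ) + x i)^2))
    (fun i k => (Real.exp_pos _).le)
    (fun i => (gauss_int hs (x i)).1.hasSum)
  have heq : (fun n : Fin l → ℤ => ∏ i, Real.exp (-s * ((n i : ℝ) + x i)^2))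
      = fun n : Fin l → ℤ => Real.exp (-s * nsq (fun i => (n i : ℝ) + x i)) := by
    funext n
    rw [← Real.exp_sum]
    congr 1
    rw [nsq, Finset.mul_sum]
  rw [heq] at key
  refine ⟨key.summable, ?_⟩
  rw [key.tsum_eq]
  calc ∏ i, ∑' n : ℤ, Real.exp (-s * ((n : ℝ) + x i)^2)
      ≤ ∏ _i : Fin l, (2 + 2 * Real.sqrt Real.pi / Real.sqrt s) := by
        apply Finset.prod_le_prod
        · exact fun i _ => tsum_nonneg fun n => (Real.exp_pos _).le
        · exact fun i _ => (gauss_int hs (x i)).2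
    _ = (2 + 2 * Real.sqrt Real.pi / Real.sqrt s) ^ l := by
        rw [Finset.prod_const, Finset.card_univ, Fintype.card_fin]

lemma norm_exp_I_mul_real (θ : ℝ) : ‖Complex.exp (Complex.I * (θ : ℂ))‖ = 1 := by
  rw [Complex.norm_exp]
  simp

lemma key_lemma (l : ℕ) (a : ℝ) (ha : 0 < a)
    (A : ℝ → Matrix (Fin l) (Fin l) ℝ) (A₀ : Matrix (Fin l) (Fin l) ℝ)
    (hA0 : A₀.PosDef)
    (hAlim : Filter.Tendsto A (nhdsWithin 0 (Set.Ioc 0 a)) (nhds A₀))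
    (B : ℝ → Matrix (Fin l) (Fin l) ℝ) (B₀ : Matrix (Fin l) (Fin l) ℝ)
    (hBlim : Filter.Tendsto (fun ε : ℝ => ε⁻¹ • (B ε - B₀))
      (nhdsWithin 0 (Set.Ioc 0 a)) (nhds 0))
    (x₁ x₂ : Fin l → ℝ) :
    Filter.Tendsto
      (fun ε : ℝ =>
        ((ε ^ ((l : ℝ) / 2) : ℝ) : ℂ) *
          ∑' n : Fin l → ℤ,
            ((Real.exp (-ε * dotProduct (fun i => (n i : ℝ) + x₁ i)
                ((A ε).mulVec fun i => (n i : ℝ) + x₁ i)) : ℝ) : ℂ) *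
              Complex.exp (Complex.I *
                ((dotProduct (fun i => (n i : ℝ) + x₂ i)
                  ((B ε).mulVec fun i => (n i : ℝ) + x₂ i) : ℝ) : ℂ)) -
        ((ε ^ ((l : ℝ) / 2) : ℝ) : ℂ) *
          ∑' n : Fin l → ℤ,
            ((Real.exp (-ε * dotProduct (fun i => (n i : ℝ) + x₁ i)
                ((A ε).mulVec fun i => (n i : ℝ) + x₁ i)) : ℝ) : ℂ) *
              Complex.exp (Complex.I *
                ((dotProduct (fun i => (n i : ℝ) + x₂ i)
                  (B₀.mulVec fun i => (n i : ℝ) + x₂ i) : ℝ) : ℂ)))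
      (nhdsWithin 0 (Set.Ioc 0 a)) (nhds 0) := by
  obtain ⟨c, hc, hcq⟩ := posdef_coercive hA0
  have hcont : Continuous (entSum (l := l)) := by
    unfold entSum
    exact continuous_finset_sum _ fun i _ => continuous_finset_sum _ fun j _ =>
      continuous_abs.comp (continuous_id.matrix_elem i j)
  have hδ0 : Tendsto (fun ε : ℝ => entSum (ε⁻¹ • (B ε - B₀)))
      (nhdsWithin 0 (Set.Ioc 0 a)) (nhds 0) := by
    have h := (hcont.tendsto (0 : Matrix (Fin l) (Fin l) ℝ)).comp hBlim
    have h0 : entSum (0 : Matrix (Fin l) (Fin l) ℝ) = 0 := by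
      unfold entSum; simp
    rw [h0] at h
    exact h
  have hAev : ∀ᶠ ε in nhdsWithin 0 (Set.Ioc 0 a), entSum (A ε - A₀) ≤ c/2 := by
    have hc2 : Continuous fun M : Matrix (Fin l) (Fin l) ℝ => entSum (M - A₀) :=
      hcont.comp (continuous_id.sub continuous_const)
    have h2 := (hc2.tendsto A₀).comp hAlim
    have h0 : entSum (A₀ - A₀) = 0 := by rw [sub_self]; unfold entSum; simp
    rw [h0] at h2
    exact h2.eventually_le_const (by positivity)
  set R : ℝ := 2 * nsq (fun i => x₂ i - x₁ i) with hR
  have hR0 : 0 ≤ R := by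
    rw [hR]; have := nsq_nonneg (fun i => x₂ i - x₁ i); linarith
  set K₁ : ℝ := 4/c + a * R with hK₁
  have hK₁0 : 0 ≤ K₁ := by rw [hK₁]; positivity
  set K₃ : ℝ := 2 * Real.sqrt a + 2 * Real.sqrt Real.pi / Real.sqrt (c/4) with hK₃
  have hK₃0 : 0 ≤ K₃ := by
    rw [hK₃]; positivity
  apply squeeze_zero_norm' (a := fun ε => K₁ * K₃ ^ l * entSum (ε⁻¹ • (B ε - B₀)))
  · -- eventual bound
    filter_upwards [eventually_mem_nhdsWithin, hAev] with ε hεmem hAe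
    obtain ⟨hε0, hεa⟩ := hεmem
    set δ : ℝ := entSum (ε⁻¹ • (B ε - B₀)) with hδ
    have hδnn : 0 ≤ δ := entSum_nonneg _
    set W : (Fin l → ℤ) → ℝ := fun n => nsq (fun i => (n i : ℝ) + x₁ i) with hW
    have hWnn : ∀ n, 0 ≤ W n := fun n => nsq_nonneg _
    set q1 : (Fin l → ℤ) → ℝ := fun n => dotProduct (fun i => (n i : ℝ) + x₁ i)
      ((A ε).mulVec fun i => (n i : ℝ) + x₁ i) with hq1
    -- coercivity for A ε
    have hcoer : ∀ v : Fin l → ℝ, (c/2) * nsq v ≤ dotProduct v ((A ε).mulVec v) := by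
      intro v
      have h1 := hcq v
      have h2 := quad_abs_le (A ε - A₀) v
      have h3 : dotProduct v ((A ε - A₀).mulVec v)
          = dotProduct v ((A ε).mulVec v) - dotProduct v (A₀.mulVec v) := by
        rw [Matrix.sub_mulVec, dotProduct_sub]
      have h4 : entSum (A ε - A₀) * nsq v ≤ (c/2) * nsq v :=
        mul_le_mul_of_nonneg_right hAe (nsq_nonneg v)
      have h5 := (abs_le.1 h2).1
      rw [h3] at h5
      linarith
    -- bound for B difference quadratic form
    have hQB : ∀ v : Fin l → ℝ,
        |dotProduct v ((B ε - B₀).mulVec v)| ≤ ε * δ * nsq v := by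
      intro v
      have hsm : B ε - B₀ = ε • (ε⁻¹ • (B ε - B₀)) := by
        rw [smul_smul, mul_inv_cancel₀ hε0.ne', one_smul]
      rw [hsm, Matrix.smul_mulVec, dotProduct_smul, smul_eq_mul, abs_mul,
        abs_of_pos hε0]
      have := quad_abs_le (ε⁻¹ • (B ε - B₀)) v
      calc ε * |dotProduct v ((ε⁻¹ • (B ε - B₀)).mulVec v)|
          ≤ ε * (δ * nsq v) := by
            apply mul_le_mul_of_nonneg_left _ hε0.le
            rw [hδ]; exact this
        _ = ε * δ * nsq v := by ring
    -- summability
    have hs₁ : (0:ℝ) < c/2 * ε := by positivity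
    have hs₂ : (0:ℝ) < c/4 * ε := by positivity
    obtain ⟨hg1sum, _⟩ := gauss_multi l hs₁ x₁
    obtain ⟨hg2sum, hg2le⟩ := gauss_multi l hs₂ x₁
    set t1 : (Fin l → ℤ) → ℂ := fun n =>
      ((Real.exp (-ε * q1 n) : ℝ) : ℂ) *
        Complex.exp (Complex.I * ((dotProduct (fun i => (n i : ℝ) + x₂ i)
          ((B ε).mulVec fun i => (n i : ℝ) + x₂ i) : ℝ) : ℂ)) with ht1
    set t2 : (Fin l → ℤ) → ℂ := fun n =>
      ((Real.exp (-ε * q1 n) : ℝ) : ℂ) *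
        Complex.exp (Complex.I * ((dotProduct (fun i => (n i : ℝ) + x₂ i)
          (B₀.mulVec fun i => (n i : ℝ) + x₂ i) : ℝ) : ℂ)) with ht2
    have hnorm1 : ∀ n, ‖t1 n‖ = Real.exp (-ε * q1 n) := by
      intro n
      rw [ht1]
      rw [norm_mul, Complex.norm_real, norm_exp_I_mul_real, mul_one, Real.norm_eq_abs,
        abs_of_pos (Real.exp_pos _)]
    have hnorm2 : ∀ n, ‖t2 n‖ = Real.exp (-ε * q1 n) := by
      intro n
      rw [ht2]
      rw [norm_mul, Complex.norm_real, norm_exp_I_mul_real, mul_one, Real.norm_eq_abs,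
        abs_of_pos (Real.exp_pos _)]
    have hexple : ∀ n, Real.exp (-ε * q1 n) ≤ Real.exp (-(c/2 * ε) * W n) := by
      intro n
      apply Real.exp_le_exp.2
      have := hcoer (fun i => (n i : ℝ) + x₁ i)
      have hεq : ε * ((c/2) * W n) ≤ ε * q1 n := by
        apply mul_le_mul_of_nonneg_left _ hε0.le
        rw [hW, hq1]; exact this
      nlinarith
    have hsum1 : Summable t1 :=
      Summable.of_norm_bounded hg1sum (fun n => by rw [hnorm1 n]; exact hexple n)
    have hsum2 : Summable t2 :=
      Summable.of_norm_bounded hg1sum (fun n => by rw [hnorm2 n]; exact hexple n)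
    -- termwise bound
    have hM : ∀ n, ‖t1 n - t2 n‖ ≤ δ * K₁ * Real.exp (-(c/4 * ε) * W n) := by
      intro n
      set θ1 : ℝ := dotProduct (fun i => (n i : ℝ) + x₂ i)
        ((B ε).mulVec fun i => (n i : ℝ) + x₂ i) with hθ1
      set θ2 : ℝ := dotProduct (fun i => (n i : ℝ) + x₂ i)
        (B₀.mulVec fun i => (n i : ℝ) + x₂ i) with hθ2
      have hsplit : t1 n - t2 n = ((Real.exp (-ε * q1 n) : ℝ) : ℂ) *
          (Complex.exp (Complex.I * (θ1:ℂ)) - Complex.exp (Complex.I * (θ2:ℂ))) := by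
        rw [ht1, ht2, mul_sub]
      rw [hsplit, norm_mul, Complex.norm_real, Real.norm_eq_abs,
        abs_of_pos (Real.exp_pos _)]
      have hdiff : θ1 - θ2 = dotProduct (fun i => (n i : ℝ) + x₂ i)
          ((B ε - B₀).mulVec fun i => (n i : ℝ) + x₂ i) := by
        rw [hθ1, hθ2, Matrix.sub_mulVec, dotProduct_sub]
      have hθb : |θ1 - θ2| ≤ ε * δ * (2 * W n + R) := by
        rw [hdiff]
        have habs := hQB (fun i => (n i : ℝ) + x₂ i)
        have hWn : nsq (fun i => (n i : ℝ) + x₂ i) ≤ 2 * W n + R := by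
          simp only [hW, hR, nsq_def, Finset.mul_sum, ← Finset.sum_add_distrib]
          apply Finset.sum_le_sum
          intro i _
          nlinarith [sq_nonneg ((n i : ℝ) + x₁ i - (x₂ i - x₁ i))]
        have hprod := mul_le_mul_of_nonneg_left hWn (mul_nonneg hε0.le hδnn)
        linarith
      calc Real.exp (-ε * q1 n) * ‖Complex.exp (Complex.I * (θ1:ℂ)) -
            Complex.exp (Complex.I * (θ2:ℂ))‖
          ≤ Real.exp (-(c/2 * ε) * W n) * (ε * δ * (2 * W n + R)) := by
            apply mul_le_mul (hexple n) ((norm_cexp_I_mul_sub θ1 θ2).trans hθb)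
              (norm_nonneg _) (Real.exp_pos _).le
        _ ≤ δ * K₁ * Real.exp (-(c/4 * ε) * W n) := by
            have hT : (0:ℝ) ≤ c/2 * ε * W n := mul_nonneg (by positivity) (hWnn n)
            have hme := mul_exp_neg_le (c/2 * ε * W n) hT
            have hhalf : -(c/2 * ε * W n / 2) = -(c/4 * ε) * W n := by ring
            rw [hhalf] at hme
            have hmono : Real.exp (-(c/2 * ε) * W n) ≤ Real.exp (-(c/4 * ε) * W n) := by
              apply Real.exp_le_exp.2
              nlinarith [hWnn n]
            have hexp1 : Real.exp (-(c/2 * ε) * W n) * (ε * δ * (2 * W n)) ≤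
                δ * (4/c) * Real.exp (-(c/4 * ε) * W n) := by
              have h6 : Real.exp (-(c/2 * ε) * W n) = Real.exp (-(c/2 * ε * W n)) := by
                congr 1; ring
              rw [h6]
              have h7 : ε * δ * (2 * W n) = δ * (4/c) * (c/2 * ε * W n) := by
                field_simp; ring
              rw [h7]
              calc Real.exp (-(c/2 * ε * W n)) * (δ * (4/c) * (c/2 * ε * W n))
                  = δ * (4/c) * ((c/2 * ε * W n) * Real.exp (-(c/2 * ε * W n))) := by ring
                _ ≤ δ * (4/c) * Real.exp (-(c/4 * ε) * W n) := by
                    apply mul_le_mul_of_nonneg_left hme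
                    exact mul_nonneg hδnn (by positivity)
            have hexp2 : Real.exp (-(c/2 * ε) * W n) * (ε * δ * R) ≤
                δ * (a * R) * Real.exp (-(c/4 * ε) * W n) := by
              calc Real.exp (-(c/2 * ε) * W n) * (ε * δ * R)
                  ≤ Real.exp (-(c/4 * ε) * W n) * (a * δ * R) := by
                    apply mul_le_mul hmono _ (by nlinarith [mul_nonneg (mul_nonneg hε0.le hδnn) hR0]) (Real.exp_pos _).le
                    have h10 : ε * (δ * R) ≤ a * (δ * R) :=
                      mul_le_mul_of_nonneg_right hεa (mul_nonneg hδnn hR0)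
                    nlinarith
                _ = δ * (a * R) * Real.exp (-(c/4 * ε) * W n) := by ring
            have hKdef : δ * K₁ = δ * (4/c) + δ * (a * R) := by rw [hK₁]; ring
            nlinarith [Real.exp_pos (-(c/4 * ε) * W n)]
    -- assemble
    have hMsum : Summable (fun n => δ * K₁ * Real.exp (-(c/4 * ε) * W n)) := by
      apply Summable.mul_left
      exact hg2sum
    have htsub : ‖(∑' n, t1 n) - ∑' n, t2 n‖ ≤ δ * K₁ *
        (2 + 2 * Real.sqrt Real.pi / Real.sqrt (c/4 * ε)) ^ l := by
      rw [← Summable.tsum_sub hsum1 hsum2]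
      calc ‖∑' n, (t1 n - t2 n)‖ ≤ δ * K₁ * ∑' n, Real.exp (-(c/4 * ε) * W n) := by
            have := tsum_of_norm_bounded (f := fun n => t1 n - t2 n)
              ((hMsum.hasSum)) hM
            rw [tsum_mul_left] at this
            exact this
        _ ≤ δ * K₁ * (2 + 2 * Real.sqrt Real.pi / Real.sqrt (c/4 * ε)) ^ l := by
            apply mul_le_mul_of_nonneg_left hg2le (mul_nonneg hδnn hK₁0)
    -- final numeric bound
    have hεpow : ε ^ ((l : ℝ)/2) = Real.sqrt ε ^ l := by
      rw [Real.sqrt_eq_rpow, ← Real.rpow_natCast (ε ^ ((1:ℝ)/2)) l, ← Real.rpow_mul hε0.le]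
      congr 1
      ring
    have hbase : Real.sqrt ε * (2 + 2 * Real.sqrt Real.pi / Real.sqrt (c/4 * ε)) ≤ K₃ := by
      have hsε : 0 < Real.sqrt ε := Real.sqrt_pos.2 hε0
      have hsc : 0 < Real.sqrt (c/4) := Real.sqrt_pos.2 (by positivity)
      have hmul : Real.sqrt (c/4 * ε) = Real.sqrt (c/4) * Real.sqrt ε :=
        Real.sqrt_mul (by positivity) ε
      rw [hmul, hK₃]
      have h8 : Real.sqrt ε * (2 * Real.sqrt Real.pi / (Real.sqrt (c/4) * Real.sqrt ε))
          = 2 * Real.sqrt Real.pi / Real.sqrt (c/4) := by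
        field_simp
      have h9 : Real.sqrt ε ≤ Real.sqrt a := Real.sqrt_le_sqrt hεa
      calc Real.sqrt ε * (2 + 2 * Real.sqrt Real.pi / (Real.sqrt (c/4) * Real.sqrt ε))
          = 2 * Real.sqrt ε + Real.sqrt ε *
            (2 * Real.sqrt Real.pi / (Real.sqrt (c/4) * Real.sqrt ε)) := by ring
        _ = 2 * Real.sqrt ε + 2 * Real.sqrt Real.pi / Real.sqrt (c/4) := by rw [h8]
        _ ≤ 2 * Real.sqrt a + 2 * Real.sqrt Real.pi / Real.sqrt (c/4) := by linarith
    have hpowle : ε ^ ((l : ℝ)/2) *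
        (2 + 2 * Real.sqrt Real.pi / Real.sqrt (c/4 * ε)) ^ l ≤ K₃ ^ l := by
      rw [hεpow, ← mul_pow]
      apply pow_le_pow_left₀ _ hbase
      positivity
    -- put everything together
    rw [← mul_sub, norm_mul, Complex.norm_real, Real.norm_eq_abs,
      _root_.abs_of_nonneg (Real.rpow_nonneg hε0.le _)]
    calc ε ^ ((l : ℝ)/2) * ‖(∑' n, t1 n) - ∑' n, t2 n‖
        ≤ ε ^ ((l : ℝ)/2) * (δ * K₁ *
          (2 + 2 * Real.sqrt Real.pi / Real.sqrt (c/4 * ε)) ^ l) := by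
          apply mul_le_mul_of_nonneg_left htsub (Real.rpow_nonneg hε0.le _)
      _ = (K₁ * δ) * (ε ^ ((l : ℝ)/2) *
          (2 + 2 * Real.sqrt Real.pi / Real.sqrt (c/4 * ε)) ^ l) := by ring
      _ ≤ (K₁ * δ) * K₃ ^ l := by
          apply mul_le_mul_of_nonneg_left hpowle (mul_nonneg hK₁0 hδnn)
      _ = K₁ * K₃ ^ l * δ := by ring
  · have := hδ0.const_mul (K₁ * K₃ ^ l)
    simpa using this

end Statement18Aux

set_option maxHeartbeats 1000000 in
/-- the technical lemma in the appendix of Hansen–Takata.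
If `A(ε) → A₀` are symmetric positive definite and `(1/ε)(B(ε) − B₀) → 0` as
`ε → 0⁺`, then for any `x₁, x₂ ∈ ℝ^l` and `L ∈ ℂ`,
`ε^{l/2} Σ_{n∈ℤ^l} e^{−ε⟨n+x₁,A(ε)(n+x₁)⟩} exp(i⟨n+x₂,B(ε)(n+x₂)⟩) → L`
iff the same holds with `B(ε)` replaced by `B₀`. -/
theorem statement18 (l : ℕ) (a : ℝ) (ha : 0 < a)
    (A : ℝ → Matrix (Fin l) (Fin l) ℝ) (A₀ : Matrix (Fin l) (Fin l) ℝ)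
    (hApos : ∀ ε ∈ Set.Ioc (0 : ℝ) a, (A ε).PosDef) (hA0 : A₀.PosDef)
    (hAlim : Filter.Tendsto A (nhdsWithin 0 (Set.Ioc 0 a)) (nhds A₀))
    (B : ℝ → Matrix (Fin l) (Fin l) ℝ) (B₀ : Matrix (Fin l) (Fin l) ℝ)
    (hBinv : ∀ ε ∈ Set.Ioc (0 : ℝ) a, IsUnit (B ε))
    (hBlim : Filter.Tendsto (fun ε : ℝ => ε⁻¹ • (B ε - B₀))
      (nhdsWithin 0 (Set.Ioc 0 a)) (nhds 0))
    (x₁ x₂ : Fin l → ℝ) (L : ℂ) :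
    Filter.Tendsto
        (fun ε : ℝ =>
          ((ε ^ ((l : ℝ) / 2) : ℝ) : ℂ) *
            ∑' n : Fin l → ℤ,
              ((Real.exp (-ε * dotProduct (fun i => (n i : ℝ) + x₁ i)
                  ((A ε).mulVec fun i => (n i : ℝ) + x₁ i)) : ℝ) : ℂ) *
                Complex.exp (Complex.I *
                  ((dotProduct (fun i => (n i : ℝ) + x₂ i)
                    ((B ε).mulVec fun i => (n i : ℝ) + x₂ i) : ℝ) : ℂ)))
        (nhdsWithin 0 (Set.Ioc 0 a)) (nhds L) ↔
      Filter.Tendsto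
        (fun ε : ℝ =>
          ((ε ^ ((l : ℝ) / 2) : ℝ) : ℂ) *
            ∑' n : Fin l → ℤ,
              ((Real.exp (-ε * dotProduct (fun i => (n i : ℝ) + x₁ i)
                  ((A ε).mulVec fun i => (n i : ℝ) + x₁ i)) : ℝ) : ℂ) *
                Complex.exp (Complex.I *
                  ((dotProduct (fun i => (n i : ℝ) + x₂ i)
                    (B₀.mulVec fun i => (n i : ℝ) + x₂ i) : ℝ) : ℂ)))
        (nhdsWithin 0 (Set.Ioc 0 a)) (nhds L) := by
  have key := key_lemma l a ha A A₀ hA0 hAlim B B₀ hBlim x₁ x₂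
  constructor
  · intro h
    have h2 := h.sub key
    rw [sub_zero] at h2
    exact h2.congr (fun ε => by ring)
  · intro h
    have h2 := h.add key
    rw [add_zero] at h2
    exact h2.congr (fun ε => by ring)
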